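/- If the Baron–Myerson-with-quantity-floor schedule q* solves (ROPT), then every solution q^OPT of (ROPT) satisfies q^OPT(θ) = q*(θ) for all θ ∈ (θ̲, θ̄]. -/

import Mathlib

open MeasureTheory Set

noncomputable section

/-- The base environment: type space `Θ = [θl, θu]`, capacity `qbar`, lowest inverse
demand `Pl = P̲` (decreasing and continuous on `[0, qbar]` with `Pl 0 > θu`) and the
induced lowest demand `Dl = D̲`, with `Dl θl < qbar`. -/
structure Env where
  θl : ℝ
  θu : ℝ
  qbar : ℝ
  Pl : ℝ → ℝ
  Dl : ℝ → ℝ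
  θl_pos : 0 < θl
  θlu : θl < θu
  qbar_pos : 0 < qbar
  Pl_anti : StrictAntiOn Pl (Icc 0 qbar)
  Pl_cont : ContinuousOn Pl (Icc 0 qbar)
  Pl0 : θu < Pl 0
  Dl_inv : ∀ p, Pl qbar ≤ p → p ≤ Pl 0 → Dl p ∈ Icc (0:ℝ) qbar ∧ Pl (Dl p) = p
  Dl_high : ∀ p, Pl 0 < p → Dl p = 0
  Dl_low : ∀ p, p < Pl qbar → Dl p = qbar
  Dl_lt : Dl θl < qbar

namespace Env

/-- The type space `Θ = [θl, θu]`. -/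
def Θ (E : Env) : Set ℝ := Icc E.θl E.θu

/-- The lowest gross value function `V̲ (x) = ∫_0^x P̲`. -/
def Vl (E : Env) (x : ℝ) : ℝ := ∫ s in (0:ℝ)..x, E.Pl s

/-- `q_ℓ = D̲(θu)`: the efficient quantity at the lowest demand and highest cost. -/
def ql (E : Env) : ℝ := E.Dl E.θu

/-- `G* = V̲(q_ℓ) − θu · q_ℓ`: the maximal attainable guarantee. -/
def Gstar (E : Env) : ℝ := E.Vl E.ql - E.θu * E.ql

/-- A feasible quantity schedule: weakly decreasing on `Θ`, valued in `[0, qbar]`. -/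
def IsSchedule (E : Env) (q : ℝ → ℝ) : Prop :=
  AntitoneOn q E.Θ ∧ ∀ θ ∈ E.Θ, q θ ∈ Icc (0:ℝ) E.qbar

/-- `W̲(θ, q) = V̲(q(θ)) − θ q(θ) − ∫_θ^{θu} q`: ex-post welfare at the lowest demand
with zero rent for the highest type. -/
def Wl (E : Env) (q : ℝ → ℝ) (θ : ℝ) : ℝ :=
  E.Vl (q θ) - θ * q θ - ∫ y in θ..E.θu, q y

/-- An IC and IR (direct) quantity mechanism `(q, u)`. -/
def IsMech (E : Env) (q u : ℝ → ℝ) : Prop :=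
  E.IsSchedule q ∧ 0 ≤ u E.θu ∧
    ∀ θ ∈ E.Θ, u θ = u E.θu + ∫ y in θ..E.θu, q y

/-- The set `𝒱` of admissible gross value functions: integrals of decreasing continuous
inverse demands dominating `P̲` pointwise. -/
def IsValue (E : Env) (V : ℝ → ℝ) : Prop :=
  ∃ P : ℝ → ℝ, StrictAntiOn P (Icc 0 E.qbar) ∧ ContinuousOn P (Icc 0 E.qbar) ∧
    (∀ s ∈ Icc (0:ℝ) E.qbar, E.Pl s ≤ P s) ∧ ∀ x, V x = ∫ s in (0:ℝ)..x, P s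

/-- A Borel probability measure supported in `Θ` (the measure of a cdf `F ∈ 𝒻`). -/
def IsTech (E : Env) (μ : Measure ℝ) : Prop :=
  IsProbabilityMeasure μ ∧ μ (E.Θᶜ) = 0

/-- Ex-ante welfare `W(M; V, F)` of the mechanism `(q, u)` under value `V` and
cost technology `μ`. -/
def W (E : Env) (q u V : ℝ → ℝ) (μ : Measure ℝ) : ℝ :=
  ∫ θ, (V (q θ) - θ * q θ - u θ) ∂μ

/-- The welfare guarantee `G(M) = inf_{V ∈ 𝒱, F ∈ 𝒻} W(M; V, F)`. -/
def G (E : Env) (q u : ℝ → ℝ) : ℝ :=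
  sInf {w : ℝ | ∃ (V : ℝ → ℝ) (μ : Measure ℝ),
    E.IsValue V ∧ E.IsTech μ ∧ w = E.W q u V μ}

/-- The short list: IC and IR mechanisms with the highest guarantee. -/
def ShortList (E : Env) (q u : ℝ → ℝ) : Prop :=
  E.IsMech q u ∧ ∀ q' u' : ℝ → ℝ, E.IsMech q' u' → E.G q' u' ≤ E.G q u

/-- Feasibility in the program (ROPT): a schedule satisfying all robustness
constraints `W̲(θ, q) ≥ G*`. -/
def FeasibleROPT (E : Env) (q : ℝ → ℝ) : Prop :=
  E.IsSchedule q ∧ ∀ θ ∈ E.Θ, E.Gstar ≤ E.Wl q θ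

end Env

/-- A demand `D ∈ 𝒟`, bundled with the inverse demand `P` that induces it:
`P` decreasing and continuous on `[0, qbar]`, `P ≥ P̲` pointwise, `P 0 > θu`. -/
structure Demand (E : Env) where
  P : ℝ → ℝ
  D : ℝ → ℝ
  P_anti : StrictAntiOn P (Icc 0 E.qbar)
  P_cont : ContinuousOn P (Icc 0 E.qbar)
  P_ge : ∀ s ∈ Icc (0:ℝ) E.qbar, E.Pl s ≤ P s
  P0 : E.θu < P 0
  D_inv : ∀ p, P E.qbar ≤ p → p ≤ P 0 → D p ∈ Icc (0:ℝ) E.qbar ∧ P (D p) = p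
  D_high : ∀ p, P 0 < p → D p = 0
  D_low : ∀ p, p < P E.qbar → D p = E.qbar
  D_lt : D E.θl < E.qbar

namespace Demand

/-- The gross value function `V_D(x) = ∫_0^x P` induced by a demand `D ∈ 𝒟`. -/
def V {E : Env} (D : Demand E) (x : ℝ) : ℝ := ∫ s in (0:ℝ)..x, D.P s

end Demand

namespace Env

/-- The lowest demand `D̲` as an element of `𝒟`. -/
def DlDemand (E : Env) : Demand E where
  P := E.Pl
  D := E.Dl
  P_anti := E.Pl_anti
  P_cont := E.Pl_cont
  P_ge := fun _ _ => le_refl _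
  P0 := E.Pl0
  D_inv := E.Dl_inv
  D_high := E.Dl_high
  D_low := E.Dl_low
  D_lt := E.Dl_lt

/-- A price regulation `(p, t)`: nonnegative prices and transfers. -/
def IsPriceReg (E : Env) (p : ℝ → ℝ) (t : ℝ → Demand E → ℝ) : Prop :=
  (∀ θ ∈ E.Θ, 0 ≤ p θ) ∧ ∀ θ ∈ E.Θ, ∀ D : Demand E, 0 ≤ t θ D

/-- The rent `ũ(θ, D) = t(θ, D) − θ · D(p(θ))` of the monopolist. -/
def rent (E : Env) (p : ℝ → ℝ) (t : ℝ → Demand E → ℝ) (θ : ℝ) (D : Demand E) : ℝ :=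
  t θ D - θ * D.D (p θ)

/-- Ex-post incentive compatibility of a price regulation. -/
def EPIC (E : Env) (p : ℝ → ℝ) (t : ℝ → Demand E → ℝ) : Prop :=
  ∀ θ ∈ E.Θ, ∀ θ' ∈ E.Θ, ∀ D : Demand E,
    t θ' D - θ * D.D (p θ') ≤ E.rent p t θ D

/-- Ex-post individual rationality of a price regulation. -/
def EPIR (E : Env) (p : ℝ → ℝ) (t : ℝ → Demand E → ℝ) : Prop :=
  ∀ θ ∈ E.Θ, ∀ D : Demand E, 0 ≤ E.rent p t θ D

/-- Ex-post welfare `w̃(θ; D) = V_D(D(p(θ))) − θ·D(p(θ)) − ũ(θ, D)`. -/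
def wt (E : Env) (p : ℝ → ℝ) (t : ℝ → Demand E → ℝ) (θ : ℝ) (D : Demand E) : ℝ :=
  D.V (D.D (p θ)) - θ * D.D (p θ) - E.rent p t θ D

/-- Ex-ante welfare `W̃((p,t); D, F)` of a price regulation. -/
def Wt (E : Env) (p : ℝ → ℝ) (t : ℝ → Demand E → ℝ) (D : Demand E) (μ : Measure ℝ) : ℝ :=
  ∫ θ, E.wt p t θ D ∂μ

/-- The welfare guarantee `G̃((p,t)) = inf_{D ∈ 𝒟, F ∈ 𝒻} W̃((p,t); D, F)`. -/
def Gt (E : Env) (p : ℝ → ℝ) (t : ℝ → Demand E → ℝ) : ℝ :=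
  sInf {w : ℝ | ∃ (D : Demand E) (μ : Measure ℝ), E.IsTech μ ∧ w = E.Wt p t D μ}

/-- An EPIC and EPIR price regulation. -/
def IsAdmissiblePR (E : Env) (p : ℝ → ℝ) (t : ℝ → Demand E → ℝ) : Prop :=
  E.IsPriceReg p t ∧ E.EPIC p t ∧ E.EPIR p t

/-- The price short list: EPIC and EPIR price regulations with the highest guarantee. -/
def PriceShortList (E : Env) (p : ℝ → ℝ) (t : ℝ → Demand E → ℝ) : Prop :=
  E.IsAdmissiblePR p t ∧
    ∀ (p' : ℝ → ℝ) (t' : ℝ → Demand E → ℝ), E.IsAdmissiblePR p' t' → E.Gt p' t' ≤ E.Gt p t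

end Env

/-- The conjectured model: a regular cdf `F*` with density `f*` on `Θ`, and a
conjectured inverse demand `P*` (with induced demand `D*`) dominating `P̲`. -/
structure Model (E : Env) where
  Fstar : ℝ → ℝ
  fstar : ℝ → ℝ
  Pstar : ℝ → ℝ
  Dstar : ℝ → ℝ
  fstar_pos : ∀ θ ∈ E.Θ, 0 < fstar θ
  Fstar_ac : ∀ θ ∈ E.Θ, Fstar θ = ∫ y in E.θl..θ, fstar y
  Fstar_l : Fstar E.θl = 0
  Fstar_u : Fstar E.θu = 1
  zstar_cont : ContinuousOn (fun θ => θ + Fstar θ / fstar θ) E.Θ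
  zstar_mono : StrictMonoOn (fun θ => θ + Fstar θ / fstar θ) E.Θ
  Pstar_anti : StrictAntiOn Pstar (Icc 0 E.qbar)
  Pstar_cont : ContinuousOn Pstar (Icc 0 E.qbar)
  Pstar_ge : ∀ s ∈ Icc (0:ℝ) E.qbar, E.Pl s ≤ Pstar s
  Pstar0 : E.θu < Pstar 0
  Dstar_inv : ∀ p, Pstar E.qbar ≤ p → p ≤ Pstar 0 →
    Dstar p ∈ Icc (0:ℝ) E.qbar ∧ Pstar (Dstar p) = p
  Dstar_high : ∀ p, Pstar 0 < p → Dstar p = 0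
  Dstar_low : ∀ p, p < Pstar E.qbar → Dstar p = E.qbar
  Dstar_lt : Dstar E.θl < E.qbar

namespace Model

variable {E : Env} (Mo : Model E)

/-- The virtual cost `z*(θ) = θ + F*(θ)/f*(θ)`. -/
def zstar (θ : ℝ) : ℝ := θ + Mo.Fstar θ / Mo.fstar θ

/-- The conjectured gross value function `V*(x) = ∫_0^x P*`. -/
def Vstar (x : ℝ) : ℝ := ∫ s in (0:ℝ)..x, Mo.Pstar s

/-- The Baron–Myerson schedule `q^BM(θ) = D*(z*(θ))`. -/
def qBM (θ : ℝ) : ℝ := Mo.Dstar (Mo.zstar θ)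

/-- The Baron–Myerson-with-quantity-floor schedule `q*(θ) = max{q^BM(θ), q_ℓ}`. -/
def qstar (θ : ℝ) : ℝ := max (Mo.qBM θ) E.ql

/-- The objective of (ROPT): expected virtual surplus under the conjectured model. -/
def J (q : ℝ → ℝ) : ℝ :=
  ∫ θ in E.θl..E.θu, (Mo.Vstar (q θ) - Mo.zstar θ * q θ) * Mo.fstar θ

/-- `q` solves the program (ROPT). -/
def SolvesROPT (q : ℝ → ℝ) : Prop :=
  E.FeasibleROPT q ∧ ∀ q' : ℝ → ℝ, E.FeasibleROPT q' → Mo.J q' ≤ Mo.J q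

/-- `θ*`: the unique solution of `q^BM(θ*) = q_ℓ` in `Θ` when `q^BM(θu) < q_ℓ`;
otherwise `θ* = θu`. -/
def IsThetaStar (θs : ℝ) : Prop :=
  (Mo.qBM E.θu < E.ql ∧ θs ∈ E.Θ ∧ Mo.qBM θs = E.ql) ∨
    (E.ql ≤ Mo.qBM E.θu ∧ θs = E.θu)

/-- `θ^m`: the largest minimizer of `W̲(·, q*)` over `Θ`. -/
def IsThetaM (θm : ℝ) : Prop :=
  θm ∈ E.Θ ∧ (∀ θ' ∈ E.Θ, E.Wl Mo.qstar θm ≤ E.Wl Mo.qstar θ') ∧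
    ∀ θ ∈ E.Θ, (∀ θ' ∈ E.Θ, E.Wl Mo.qstar θ ≤ E.Wl Mo.qstar θ') → θ ≤ θm

/-- The conjectured demand `D*` as an element of `𝒟`. -/
def DstarDemand : Demand E where
  P := Mo.Pstar
  D := Mo.Dstar
  P_anti := Mo.Pstar_anti
  P_cont := Mo.Pstar_cont
  P_ge := Mo.Pstar_ge
  P0 := Mo.Pstar0
  D_inv := Mo.Dstar_inv
  D_high := Mo.Dstar_high
  D_low := Mo.Dstar_low
  D_lt := Mo.Dstar_lt

/-- Expected welfare `W((q,u); V*, F*)` of a quantity mechanism under the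
conjectured model. -/
def WStar (q u : ℝ → ℝ) : ℝ :=
  ∫ θ in E.θl..E.θu, (Mo.Vstar (q θ) - θ * q θ - u θ) * Mo.fstar θ

/-- Expected welfare `W̃((p,t); D*, F*)` of a price regulation under the
conjectured model. -/
def WtStar (p : ℝ → ℝ) (t : ℝ → Demand E → ℝ) : ℝ :=
  ∫ θ in E.θl..E.θu, E.wt p t θ Mo.DstarDemand * Mo.fstar θ

/-- A robustly optimal price regulation: in the price short list, and maximizing
expected welfare under the conjectured model over the price short list. -/
def RobustlyOptimalPR (p : ℝ → ℝ) (t : ℝ → Demand E → ℝ) : Prop :=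
  E.PriceShortList p t ∧
    ∀ (p' : ℝ → ℝ) (t' : ℝ → Demand E → ℝ), E.PriceShortList p' t' →
      Mo.WtStar p' t' ≤ Mo.WtStar p t

/-- A Baron–Myerson-with-price-cap regulation. -/
def IsBMPriceCap (p : ℝ → ℝ) (t : ℝ → Demand E → ℝ) : Prop :=
  E.IsAdmissiblePR p t ∧
  (∀ θ ∈ E.Θ, p θ = min (Mo.zstar θ) E.θu) ∧
  (∀ θ ∈ E.Θ, ∀ D : Demand E,
    E.rent p t θ D = E.rent p t E.θu D + ∫ y in θ..E.θu, D.D (p y)) ∧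
  (∀ D : Demand E, D ≠ E.DlDemand → D ≠ Mo.DstarDemand →
    0 ≤ E.rent p t E.θu D ∧
      E.rent p t E.θu D ≤ D.V (D.D E.θu) - E.θu * D.D E.θu - E.Gstar) ∧
  E.rent p t E.θu E.DlDemand = 0 ∧ E.rent p t E.θu Mo.DstarDemand = 0

end Model

/-!
Both `q*` and `q^OPT` are optimal, and the feasible set of (ROPT) is convex because `V̲` is
concave, so their midpoint is feasible. Since `V*` is strictly concave, the objective is strictly
concave in the schedule: the midpoint would do strictly better unless the two schedules agree
almost everywhere. A decreasing schedule that agrees a.e. with the continuous `q*` agrees with it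
on `(θl, θu)`; at `θu` every feasible schedule equals `q_ℓ`, the unique maximiser of
`V̲(x) − θu x`.
-/

open Filter Topology

section Primitive

variable {P : ℝ → ℝ} {a b : ℝ}

theorem ContinuousOn.continuousOn_primitive_Icc (hc : ContinuousOn P (Icc a b)) :
    ContinuousOn (fun x => ∫ s in a..x, P s) (Icc a b) := by
  rcases le_or_gt a b with hab | hab
  · simpa only [uIcc_of_le hab] using
      intervalIntegral.continuousOn_primitive_interval (hc.integrableOn_Icc.mono_set
        (uIcc_subset_Icc (left_mem_Icc.2 hab) (right_mem_Icc.2 hab)))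
  · simp [Icc_eq_empty_of_lt hab]

theorem ContinuousOn.hasDerivAt_primitive (hc : ContinuousOn P (Icc a b)) {x : ℝ}
    (hx : x ∈ Ioo a b) : HasDerivAt (fun y => ∫ s in a..y, P s) (P x) x :=
  intervalIntegral.integral_hasDerivAt_right
    (hc.mono (uIcc_subset_Icc (left_mem_Icc.2 (hx.1.trans hx.2).le)
      (Ioo_subset_Icc_self hx))).intervalIntegrable
    ((hc.mono Ioo_subset_Icc_self).stronglyMeasurableAtFilter isOpen_Ioo x hx)
    (hc.continuousAt (Icc_mem_nhds hx.1 hx.2))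

theorem StrictAntiOn.strictConcaveOn_primitive (hP : StrictAntiOn P (Icc a b))
    (hc : ContinuousOn P (Icc a b)) :
    StrictConcaveOn ℝ (Icc a b) (fun x => ∫ s in a..x, P s) := by
  refine StrictAntiOn.strictConcaveOn_of_deriv (convex_Icc a b) hc.continuousOn_primitive_Icc ?_
  rw [interior_Icc]
  intro x hx y hy hxy
  rw [(hc.hasDerivAt_primitive hx).deriv, (hc.hasDerivAt_primitive hy).deriv]
  exact hP (Ioo_subset_Icc_self hx) (Ioo_subset_Icc_self hy) hxy

end Primitive

section Concave

variable {s : Set ℝ} {f : ℝ → ℝ} {x y : ℝ}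

theorem ConcaveOn.average_le_midpoint (hf : ConcaveOn ℝ s f) (hx : x ∈ s) (hy : y ∈ s) :
    (f x + f y) / 2 ≤ f ((x + y) / 2) := by
  have h := hf.2 hx hy (show (0 : ℝ) ≤ 1 / 2 by norm_num) (show (0 : ℝ) ≤ 1 / 2 by norm_num)
    (by norm_num)
  simp only [smul_eq_mul] at h
  rw [show 1 / 2 * x + 1 / 2 * y = (x + y) / 2 by ring] at h
  linarith

theorem StrictConcaveOn.average_lt_midpoint (hf : StrictConcaveOn ℝ s f) (hx : x ∈ s)
    (hy : y ∈ s) (hxy : x ≠ y) : (f x + f y) / 2 < f ((x + y) / 2) := by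
  have h := hf.2 hx hy hxy (show (0 : ℝ) < 1 / 2 by norm_num) (show (0 : ℝ) < 1 / 2 by norm_num)
    (by norm_num)
  simp only [smul_eq_mul] at h
  rw [show 1 / 2 * x + 1 / 2 * y = (x + y) / 2 by ring] at h
  linarith

theorem StrictConcaveOn.lt_of_hasDerivAt_zero {c : ℝ} (hf : StrictConcaveOn ℝ s f)
    (hc : c ∈ s) (hx : x ∈ s) (hxc : x ≠ c) (hd : HasDerivAt f 0 c) : f x < f c := by
  rcases hxc.lt_or_gt with h | h
  · have := hf.lt_slope_of_hasDerivAt hx hc h hd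
    rw [slope_def_field, lt_div_iff₀ (sub_pos.2 h)] at this
    linarith
  · have := hf.slope_lt_of_hasDerivAt hc hx h hd
    rw [slope_def_field, div_lt_iff₀ (sub_pos.2 h)] at this
    linarith

end Concave

section AeEq

variable {μ : Measure ℝ} [μ.IsOpenPosMeasure] {p : ℝ → Prop}

theorem frequently_nhdsGT_of_ae (h : ∀ᵐ y ∂μ, p y) (x : ℝ) : ∃ᶠ y in 𝓝[>] x, p y := by
  intro hev
  obtain ⟨u, hxu, hsub⟩ := mem_nhdsGT_iff_exists_Ioo_subset.1 hev
  exact (Measure.measure_Ioo_pos μ).2 hxu |>.ne' (measure_mono_null hsub (ae_iff.1 h))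

theorem frequently_nhdsLT_of_ae (h : ∀ᵐ y ∂μ, p y) (x : ℝ) : ∃ᶠ y in 𝓝[<] x, p y := by
  intro hev
  obtain ⟨l, hlx, hsub⟩ := mem_nhdsLT_iff_exists_Ioo_subset.1 hev
  exact (Measure.measure_Ioo_pos μ).2 hlx |>.ne' (measure_mono_null hsub (ae_iff.1 h))

/-- Approaching `x` from the left through points of agreement gives `f x ≤ g x`, from the right
`g x ≤ f x`. -/
theorem AntitoneOn.eqOn_of_ae_eq {f g : ℝ → ℝ} {U : Set ℝ} (hU : IsOpen U)
    (hf : AntitoneOn f U) (hg : ContinuousOn g U) (h : f =ᵐ[μ.restrict U] g) : EqOn f g U := by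
  intro x hx
  have hae : ∀ᵐ y ∂μ, y ∈ U → f y = g y := (ae_restrict_iff' hU.measurableSet).1 h
  have hgx : ContinuousAt g x := hg.continuousAt (hU.mem_nhds hx)
  have hUx : ∀ᶠ y in 𝓝 x, y ∈ U := hU.mem_nhds hx
  apply le_antisymm
  · refine ge_of_tendsto_of_frequently (hgx.mono_left (nhdsWithin_le_nhds (s := Iio x))) ?_
    refine ((frequently_nhdsLT_of_ae hae x).and_eventually
      ((eventually_nhdsWithin_of_eventually_nhds hUx).and self_mem_nhdsWithin)).mono ?_
    rintro y ⟨hfg, hyU, hyx⟩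
    exact hfg hyU ▸ hf hyU hx (le_of_lt hyx)
  · refine le_of_tendsto_of_frequently (hgx.mono_left (nhdsWithin_le_nhds (s := Ioi x))) ?_
    refine ((frequently_nhdsGT_of_ae hae x).and_eventually
      ((eventually_nhdsWithin_of_eventually_nhds hUx).and self_mem_nhdsWithin)).mono ?_
    rintro y ⟨hfg, hyU, hxy⟩
    exact hfg hyU ▸ hf hx hyU (le_of_lt hxy)

end AeEq

theorem ContinuousOn.comp_aemeasurable_Icc {α : Type*} [MeasurableSpace α] {ν : Measure α}
    {φ : ℝ → ℝ} {f : α → ℝ} {c d : ℝ} (hcd : c ≤ d) (hφ : ContinuousOn φ (Icc c d))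
    (hf : AEMeasurable f ν) (hmem : ∀ᵐ x ∂ν, f x ∈ Icc c d) :
    AEMeasurable (fun x => φ (f x)) ν := by
  have hφ' : Continuous fun t => φ (projIcc c d hcd t) :=
    hφ.comp_continuous (continuous_subtype_val.comp continuous_projIcc)
      fun t => (projIcc c d hcd t).2
  refine (hφ'.measurable.comp_aemeasurable hf).congr ?_
  filter_upwards [hmem] with x hx
  simp [projIcc_of_mem hcd hx]

namespace Demand

variable {E : Env} (D : Demand E)

theorem P_qbar_le_θl : D.P E.qbar ≤ E.θl := by
  by_contra h
  exact D.D_lt.ne (D.D_low _ (not_le.1 h))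

theorem D_mem (p : ℝ) : D.D p ∈ Icc 0 E.qbar := by
  rcases lt_or_ge p (D.P E.qbar) with h | h
  · rw [D.D_low p h]; exact right_mem_Icc.2 E.qbar_pos.le
  rcases le_or_gt p (D.P 0) with h' | h'
  · exact (D.D_inv p h h').1
  · rw [D.D_high p h']; exact left_mem_Icc.2 E.qbar_pos.le

theorem D_P {x : ℝ} (hx : x ∈ Icc 0 E.qbar) : D.D (D.P x) = x := by
  have h0 : (0 : ℝ) ∈ Icc 0 E.qbar := left_mem_Icc.2 E.qbar_pos.le
  have hq : E.qbar ∈ Icc 0 E.qbar := right_mem_Icc.2 E.qbar_pos.le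
  obtain ⟨hmem, hPD⟩ := D.D_inv (D.P x) (D.P_anti.antitoneOn hx hq hx.2)
    (D.P_anti.antitoneOn h0 hx hx.1)
  exact D.P_anti.injOn hmem hx hPD

theorem antitone_D : Antitone D.D := by
  intro p p' hpp'
  by_cases h' : D.P 0 < p'
  · rw [D.D_high p' h']; exact (D.D_mem p).1
  by_cases h : p < D.P E.qbar
  · rw [D.D_low p h]; exact (D.D_mem p').2
  obtain ⟨hm, hP⟩ := D.D_inv p (not_lt.1 h) (hpp'.trans (not_lt.1 h'))
  obtain ⟨hm', hP'⟩ := D.D_inv p' ((not_lt.1 h).trans hpp') (not_lt.1 h')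
  rw [← D.P_anti.le_iff_ge hm hm', hP, hP']
  exact hpp'

/-- `D` is antitone and maps `ℝ` onto the interval `[0, qbar]`, so it cannot jump. -/
theorem continuous_D : Continuous D.D := by
  let D' : ℝ → Icc (0 : ℝ) E.qbar := fun p => ⟨D.D (-p), D.D_mem _⟩
  have hmono : Monotone D' := fun p p' h => D.antitone_D (neg_le_neg h)
  have hsurj : Function.Surjective D' := fun x =>
    ⟨-D.P x, Subtype.ext (by simp only [D', neg_neg, D.D_P x.2])⟩
  have hD' : Continuous fun p => (D' (-p) : ℝ) :=
    continuous_subtype_val.comp ((hmono.continuous_of_surjective hsurj).comp continuous_neg)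
  simpa only [D', neg_neg] using hD'

theorem strictConcaveOn_V : StrictConcaveOn ℝ (Icc 0 E.qbar) D.V :=
  D.P_anti.strictConcaveOn_primitive D.P_cont

theorem continuousOn_V : ContinuousOn D.V (Icc 0 E.qbar) :=
  D.P_cont.continuousOn_primitive_Icc

theorem D_θu_mem_Ioo : D.D E.θu ∈ Ioo 0 E.qbar := by
  have hlow : D.P E.qbar < E.θu := D.P_qbar_le_θl.trans_lt E.θlu
  obtain ⟨hmem, hP⟩ := D.D_inv E.θu hlow.le D.P0.le
  refine ⟨hmem.1.lt_of_ne ?_, hmem.2.lt_of_ne ?_⟩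
  · rintro h; rw [← h] at hP; exact D.P0.ne' hP
  · rintro h; rw [h] at hP; exact hlow.ne hP

/-- `x ↦ V_D(x) − θu x` is strictly concave and its derivative `P(x) − θu` vanishes at `D(θu)`. -/
theorem V_sub_mul_lt_of_ne {x : ℝ} (hx : x ∈ Icc 0 E.qbar) (hne : x ≠ D.D E.θu) :
    D.V x - E.θu * x < D.V (D.D E.θu) - E.θu * D.D E.θu := by
  have hc := D.D_θu_mem_Ioo
  have hV : HasDerivAt D.V (D.P (D.D E.θu)) (D.D E.θu) := D.P_cont.hasDerivAt_primitive hc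
  have hd := hV.sub ((hasDerivAt_id (D.D E.θu)).const_mul E.θu)
  rw [(D.D_inv E.θu (D.P_qbar_le_θl.trans E.θlu.le) D.P0.le).2, mul_one, sub_self] at hd
  have hlin : ConvexOn ℝ (Icc 0 E.qbar) fun y => E.θu * y :=
    (convexOn_id (convex_Icc _ _)).smul (E.θl_pos.trans E.θlu).le
  exact (D.strictConcaveOn_V.sub_convexOn hlin).lt_of_hasDerivAt_zero
    (Ioo_subset_Icc_self hc) hx hne hd

end Demand

namespace Env

variable {E : Env} {q q' : ℝ → ℝ}

theorem eq_ql_of_Gstar_le {x : ℝ} (hx : x ∈ Icc 0 E.qbar) (h : E.Gstar ≤ E.Vl x - E.θu * x) :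
    x = E.ql := by
  by_contra hne
  exact (E.DlDemand.V_sub_mul_lt_of_ne hx hne).not_ge h

theorem FeasibleROPT.apply_θu (h : E.FeasibleROPT q) : q E.θu = E.ql := by
  have hθu : E.θu ∈ E.Θ := right_mem_Icc.2 E.θlu.le
  refine eq_ql_of_Gstar_le (h.1.2 _ hθu) ?_
  simpa only [Wl, intervalIntegral.integral_same, sub_zero] using h.2 _ hθu

theorem IsSchedule.midpoint (h : E.IsSchedule q) (h' : E.IsSchedule q') :
    E.IsSchedule fun θ => (q θ + q' θ) / 2 := by
  refine ⟨fun x hx y hy hxy => ?_, fun θ hθ => ?_⟩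
  · linarith [h.1 hx hy hxy, h'.1 hx hy hxy]
  · obtain ⟨⟨h0, h1⟩, ⟨h0', h1'⟩⟩ := And.intro (h.2 θ hθ) (h'.2 θ hθ)
    constructor <;> linarith

/-- The robustness constraints are concave in the schedule, because `V̲` is concave and
`∫_θ^{θu} q` is linear. -/
theorem FeasibleROPT.midpoint (h : E.FeasibleROPT q) (h' : E.FeasibleROPT q') :
    E.FeasibleROPT fun θ => (q θ + q' θ) / 2 := by
  refine ⟨h.1.midpoint h'.1, fun θ hθ => ?_⟩
  have hsub : uIcc θ E.θu ⊆ E.Θ := by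
    rw [uIcc_of_le hθ.2]
    exact Icc_subset_Icc hθ.1 le_rfl
  have hint : ∫ y in θ..E.θu, (q y + q' y) / 2
      = ((∫ y in θ..E.θu, q y) + ∫ y in θ..E.θu, q' y) / 2 := by
    rw [intervalIntegral.integral_div, intervalIntegral.integral_add
      (h.1.1.mono hsub).intervalIntegrable (h'.1.1.mono hsub).intervalIntegrable]
  have hV : (E.Vl (q θ) + E.Vl (q' θ)) / 2 ≤ E.Vl ((q θ + q' θ) / 2) :=
    E.DlDemand.strictConcaveOn_V.concaveOn.average_le_midpoint (h.1.2 θ hθ) (h'.1.2 θ hθ)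
  have hW := h.2 θ hθ
  have hW' := h'.2 θ hθ
  simp only [Wl] at hW hW' ⊢
  rw [hint]
  linarith

end Env

namespace Model

variable {E : Env} (Mo : Model E)

theorem continuousOn_qstar : ContinuousOn Mo.qstar E.Θ :=
  ContinuousOn.sup (Mo.DstarDemand.continuous_D.comp_continuousOn Mo.zstar_cont)
    continuousOn_const

/-- Otherwise `∫ f*` would be the junk value `0`, whereas it is `F*(θu) = 1`. -/
theorem intervalIntegrable_fstar : IntervalIntegrable Mo.fstar volume E.θl E.θu := by
  by_contra h
  have hF := Mo.Fstar_ac E.θu (right_mem_Icc.2 E.θlu.le)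
  rw [Mo.Fstar_u, intervalIntegral.integral_undef h] at hF
  exact one_ne_zero hF

theorem intervalIntegrable_surplus {q : ℝ → ℝ} (hq : E.IsSchedule q) :
    IntervalIntegrable (fun θ => (Mo.Vstar (q θ) - Mo.zstar θ * q θ) * Mo.fstar θ)
      volume E.θl E.θu := by
  rw [intervalIntegrable_iff_integrableOn_Icc_of_le E.θlu.le]
  obtain ⟨C₁, hC₁⟩ := isCompact_Icc.exists_bound_of_continuousOn Mo.DstarDemand.continuousOn_V
  obtain ⟨C₂, hC₂⟩ := isCompact_Icc.exists_bound_of_continuousOn Mo.zstar_cont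
  have hqm : AEMeasurable q (volume.restrict E.Θ) :=
    aemeasurable_restrict_of_antitoneOn measurableSet_Icc hq.1
  have hmem : ∀ᵐ θ ∂volume.restrict E.Θ, θ ∈ E.Θ := ae_restrict_mem measurableSet_Icc
  have hVq : AEMeasurable (fun θ => Mo.Vstar (q θ)) (volume.restrict E.Θ) :=
    Mo.DstarDemand.continuousOn_V.comp_aemeasurable_Icc E.qbar_pos.le hqm
      (hmem.mono fun θ hθ => hq.2 θ hθ)
  have hz : AEMeasurable Mo.zstar (volume.restrict E.Θ) :=
    Mo.zstar_cont.aemeasurable measurableSet_Icc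
  refine ((intervalIntegrable_iff_integrableOn_Icc_of_le E.θlu.le).1
    Mo.intervalIntegrable_fstar).bdd_mul (c := C₁ + C₂ * E.qbar)
    (hVq.sub (hz.mul hqm)).aestronglyMeasurable ?_
  filter_upwards [hmem] with θ hθ
  have hqθ := hq.2 θ hθ
  calc ‖Mo.Vstar (q θ) - Mo.zstar θ * q θ‖ ≤ ‖Mo.Vstar (q θ)‖ + ‖Mo.zstar θ‖ * ‖q θ‖ := by
        rw [← norm_mul]; exact norm_sub_le _ _
    _ ≤ C₁ + C₂ * E.qbar := by
        refine add_le_add (hC₁ _ hqθ) (mul_le_mul (hC₂ θ hθ) ?_ (norm_nonneg _)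
          ((norm_nonneg _).trans (hC₂ θ hθ)))
        rw [Real.norm_of_nonneg hqθ.1]
        exact hqθ.2

theorem ae_eq_of_J_midpoint_le {q q' : ℝ → ℝ} (hq : E.IsSchedule q) (hq' : E.IsSchedule q')
    (h : Mo.J (fun θ => (q θ + q' θ) / 2) ≤ (Mo.J q + Mo.J q') / 2) :
    ∀ᵐ θ ∂volume.restrict (Ioc E.θl E.θu), q θ = q' θ := by
  set F : (ℝ → ℝ) → ℝ → ℝ := fun q θ => (Mo.Vstar (q θ) - Mo.zstar θ * q θ) * Mo.fstar θ
  set m : ℝ → ℝ := fun θ => (q θ + q' θ) / 2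
  set gap : ℝ → ℝ := fun θ => F m θ - (F q θ + F q' θ) / 2
  have hgap : ∀ θ, gap θ
      = (Mo.Vstar (m θ) - (Mo.Vstar (q θ) + Mo.Vstar (q' θ)) / 2) * Mo.fstar θ := fun θ => by
    simp only [gap, F, m]; ring
  have hV : StrictConcaveOn ℝ (Icc 0 E.qbar) Mo.Vstar := Mo.DstarDemand.strictConcaveOn_V
  have hgap_nonneg : ∀ θ ∈ Ioc E.θl E.θu, 0 ≤ gap θ := fun θ hθ => by
    have hθΘ : θ ∈ E.Θ := Ioc_subset_Icc_self hθ
    rw [hgap]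
    exact mul_nonneg (sub_nonneg.2 (hV.concaveOn.average_le_midpoint (hq.2 θ hθΘ) (hq'.2 θ hθΘ)))
      (Mo.fstar_pos θ hθΘ).le
  have hFq := Mo.intervalIntegrable_surplus hq
  have hFq' := Mo.intervalIntegrable_surplus hq'
  have hgap_int : IntervalIntegrable gap volume E.θl E.θu :=
    (Mo.intervalIntegrable_surplus (hq.midpoint hq')).sub ((hFq.add hFq').div_const 2)
  have hgap_le : ∫ θ in E.θl..E.θu, gap θ ≤ 0 := by
    rw [intervalIntegral.integral_sub (Mo.intervalIntegrable_surplus (hq.midpoint hq'))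
      ((hFq.add hFq').div_const 2), intervalIntegral.integral_div,
      intervalIntegral.integral_add hFq hFq']
    exact sub_nonpos.2 h
  rw [intervalIntegral.integral_of_le E.θlu.le] at hgap_le
  have hgap_ae : gap =ᵐ[volume.restrict (Ioc E.θl E.θu)] 0 :=
    (integral_eq_zero_iff_of_nonneg_ae (ae_restrict_of_forall_mem measurableSet_Ioc hgap_nonneg)
      ((intervalIntegrable_iff_integrableOn_Ioc_of_le E.θlu.le).1 hgap_int)).1
      (hgap_le.antisymm (setIntegral_nonneg measurableSet_Ioc hgap_nonneg))
  filter_upwards [hgap_ae, ae_restrict_mem measurableSet_Ioc] with θ h0 hθ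
  by_contra hne
  have hθΘ : θ ∈ E.Θ := Ioc_subset_Icc_self hθ
  exact (mul_pos (sub_pos.2 (hV.average_lt_midpoint (hq.2 θ hθΘ) (hq'.2 θ hθΘ) hne))
    (Mo.fstar_pos θ hθΘ)).ne' ((hgap θ).symm.trans h0)

end Model

/-- Corollary 1 (uniqueness of the output schedule): if `q*` solves (ROPT), then every
solution of (ROPT) coincides with `q*` on `(θl, θu]`. -/
theorem ROPT_unique_schedule (E : Env) (Mo : Model E)
    (hstar : Mo.SolvesROPT Mo.qstar)
    (qOPT : ℝ → ℝ) (hOPT : Mo.SolvesROPT qOPT) :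
    ∀ θ ∈ Ioc E.θl E.θu, qOPT θ = Mo.qstar θ := by
  obtain ⟨hfeas, hmax⟩ := hstar
  obtain ⟨hfeasOPT, hmaxOPT⟩ := hOPT
  intro θ hθ
  rcases hθ.2.eq_or_lt with rfl | hlt
  · rw [hfeasOPT.apply_θu, hfeas.apply_θu]
  have hJ : Mo.J qOPT = Mo.J Mo.qstar := le_antisymm (hmax _ hfeasOPT) (hmaxOPT _ hfeas)
  have hmid := hmax _ (hfeasOPT.midpoint hfeas)
  have hae := Mo.ae_eq_of_J_midpoint_le hfeasOPT.1 hfeas.1 (by linarith)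
  exact (hfeasOPT.1.1.mono Ioo_subset_Icc_self).eqOn_of_ae_eq isOpen_Ioo
    (Mo.continuousOn_qstar.mono Ioo_subset_Icc_self)
    (ae_restrict_of_ae_restrict_of_subset Ioo_subset_Ioc_self hae) ⟨hθ.1, hlt⟩
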